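/- Fix d ≥ 1, T ≥ 1, reals η > 0, L ≥ 0, F ≥ 0, integers P ≥ 1, s ≥ 0, and x* ∈ ℝ^d. On a probability space, let γ_1, …, γ_T be i.i.d. real random variables with 0 ≤ γ_t ≤ (2s+1)P a.s., mean μ_γ, and variance σ_γ. For each t let f_t : ℝ^d → ℝ be convex and differentiable with ‖∇f_t(x)‖₂ ≤ L everywhere; let η_t = η/√t; let (x_t) and (x̃_t) be ℝ^d-valued random sequences with x_{t+1} = x_t − η_t ∇f_t(x̃_t), x̃_t = x_t + ū_t c_t for a random scalar 0 ≤ ū_t ≤ η L/√t and random vector c_t with ‖c_t‖₂ ≤ γ_t a.s., and ½‖x* − x_t‖₂² ≤ F² a.s. for all t = 1,…,T+1. Let R[X] := ∑_{t=1}^T ( f_t(x̃_t) − f_t(x*) ) and η̄_T := η² L⁴ (ln T + 1)/T. Then for every τ > 0: P[ R[X]/T − (1/√T)( η L² + F²/η + 2 η L² μ_γ ) ≥ τ ] ≤ exp( − T τ² / ( 2 η̄_T σ_γ + (2/3) η L² (2s+1) P τ ) ). -/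

import Mathlib

/-!
Convexity bounds each loss gap `f t (x̃ t) - f t x*` by `⟪∇f t (x̃ t), x̃ t - x*⟫`. Along `x t - x*`
this inner product is controlled by expanding the SGD step: a telescoping difference of
`‖x t - x*‖²` with weights `√t / (2η)` plus `η L² / (2√t)`; along the staleness offset `ū t • c t`
it is at most `η L² γ t / √t`. Summing with `∑ 1/√t ≤ 2√T` and the diameter bound `F` leaves
the regret above `√T (ηL² + F²/η + 2ηL²μ)` by at most `∑ (ηL²/√t)(γ t - μ)`, a sum of independent
centred variables bounded by `ηL²(2s+1)P` whose variances add up to at most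
`η²L⁴(ln T + 1)σ` (a harmonic sum). Bernstein's inequality for this sum is the claimed bound.
-/

open Real MeasureTheory ProbabilityTheory

namespace Real

theorem apply_zero_le_of_hasDerivAt_nonneg {f f' : ℝ → ℝ} (hf : ∀ x, HasDerivAt f (f' x) x)
    (hf' : ∀ x, 0 < x → 0 ≤ f' x) {u : ℝ} (hu : 0 ≤ u) : f 0 ≤ f u :=
  monotoneOn_of_hasDerivWithinAt_nonneg (convex_Ici 0)
    (fun x _ => (hf x).continuousAt.continuousWithinAt) (fun x _ => (hf x).hasDerivWithinAt)
    (fun x hx => hf' x (by simpa using hx)) Set.self_mem_Ici hu hu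

theorem exp_le_quadratic_of_nonpos {u : ℝ} (hu : u ≤ 0) : exp u ≤ 1 + u + u ^ 2 / 2 := by
  have hderiv (x : ℝ) : HasDerivAt (fun x => 1 - x + x ^ 2 / 2 - exp (-x))
      (-1 + x + exp (-x)) x := by
    have := ((((hasDerivAt_id x).const_sub 1).add ((hasDerivAt_pow 2 x).div_const 2)).sub
      (hasDerivAt_neg x).exp)
    exact this.congr_deriv (by simp)
  have := apply_zero_le_of_hasDerivAt_nonneg hderiv
    (fun x _ => by linarith [add_one_le_exp (-x)]) (neg_nonneg.2 hu)
  simp only [neg_zero, exp_zero, neg_neg, neg_sq] at this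
  linarith

theorem two_sub_mul_exp_le {x : ℝ} (hx : 0 ≤ x) : (2 - x) * exp x ≤ 2 + x := by
  have hderiv (x : ℝ) : HasDerivAt (fun x => 2 + x - (2 - x) * exp x)
      (1 - (1 - x) * exp x) x := by
    have := ((hasDerivAt_id x).const_add 2).sub
      (((hasDerivAt_id x).const_sub 2).mul (hasDerivAt_exp x))
    exact this.congr_deriv (by simp; ring)
  have := apply_zero_le_of_hasDerivAt_nonneg hderiv (fun y _ => ?_) hx
  · simp only [exp_zero] at this
    linarith
  · have h := mul_le_mul_of_nonneg_right (add_one_le_exp (-y)) (exp_pos y).le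
    rw [← exp_add, neg_add_cancel, exp_zero] at h
    linarith

theorem exp_le_of_nonneg_of_lt_three {u : ℝ} (h0 : 0 ≤ u) (h3 : u < 3) :
    exp u ≤ 1 + u + u ^ 2 / (2 * (1 - u / 3)) := by
  have hderiv (x : ℝ) : HasDerivAt
      (fun x => (1 - x / 3) * (1 + x) + x ^ 2 / 2 - (1 - x / 3) * exp x)
      ((2 + x - (2 - x) * exp x) / 3) x := by
    have h1 := ((hasDerivAt_id x).div_const 3).const_sub 1
    have := ((h1.mul ((hasDerivAt_id x).const_add 1)).add
      ((hasDerivAt_pow 2 x).div_const 2)).sub (h1.mul (hasDerivAt_exp x))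
    exact this.congr_deriv (by simp; ring)
  have key := apply_zero_le_of_hasDerivAt_nonneg hderiv
    (fun x hx => div_nonneg (by linarith [two_sub_mul_exp_le hx.le]) zero_le_three) h0
  have hpos : 0 < 1 - u / 3 := by linarith
  simp only [exp_zero] at key
  calc exp u = (1 - u / 3) * exp u / (1 - u / 3) := (mul_div_cancel_left₀ _ hpos.ne').symm
    _ ≤ ((1 - u / 3) * (1 + u) + u ^ 2 / 2) / (1 - u / 3) := by gcongr; linarith
    _ = _ := by rw [add_div, mul_div_cancel_left₀ _ hpos.ne', div_div]

theorem exp_le_of_le_of_lt_three {u c : ℝ} (hu : u ≤ c) (hc0 : 0 ≤ c) (hc : c < 3) :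
    exp u ≤ 1 + u + u ^ 2 / (2 * (1 - c / 3)) := by
  have hden : 2 * (1 - c / 3) ≤ 2 := by linarith
  have hden0 : 0 < 2 * (1 - c / 3) := by linarith
  rcases le_total u 0 with hneg | hpos
  · calc exp u ≤ 1 + u + u ^ 2 / 2 := exp_le_quadratic_of_nonpos hneg
      _ ≤ _ := by gcongr
  · calc exp u ≤ 1 + u + u ^ 2 / (2 * (1 - u / 3)) :=
          exp_le_of_nonneg_of_lt_three hpos (hu.trans_lt hc)
      _ ≤ _ := by gcongr

end Real

theorem sum_Icc_one_div_sqrt_le (T : ℕ) : ∑ t ∈ Finset.Icc 1 T, 1 / √t ≤ 2 * √T := by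
  induction T with
  | zero => simp
  | succ n ih =>
    rw [Finset.sum_Icc_succ_top (by omega)]
    have hn : √(n : ℝ) ≤ √(n + 1 : ℝ) := sqrt_le_sqrt (by linarith)
    have hpos : 0 < √(n + 1 : ℝ) := sqrt_pos.2 (by positivity)
    have hsq : √(n + 1 : ℝ) ^ 2 - √(n : ℝ) ^ 2 = 1 := by
      rw [sq_sqrt (by positivity), sq_sqrt (by positivity)]; ring
    have step : 1 / √(n + 1 : ℝ) ≤ 2 * (√(n + 1 : ℝ) - √(n : ℝ)) := by
      rw [div_le_iff₀ hpos]
      nlinarith [sqrt_nonneg (n : ℝ)]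
    push_cast
    linarith

theorem sum_fin_sq_div_sqrt_le (a : ℝ) (T : ℕ) :
    ∑ i : Fin T, (a / √((i + 1 : ℕ) : ℝ)) ^ 2 ≤ a ^ 2 * (log T + 1) := by
  have hsum : ∑ i : Fin T, (a / √((i + 1 : ℕ) : ℝ)) ^ 2 = a ^ 2 * harmonic T := by
    rw [harmonic, Rat.cast_sum, ← Fin.sum_univ_eq_sum_range, Finset.mul_sum]
    refine Finset.sum_congr rfl fun i _ => ?_
    rw [div_pow, sq_sqrt (by positivity)]
    push_cast
    ring
  rw [hsum, add_comm]
  gcongr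
  exact harmonic_le_one_add_log T

theorem sum_Icc_div_sqrt_le_add_sum_fin {r : ℕ → ℝ} {m : ℝ} (hm : 0 ≤ m) (T : ℕ) :
    ∑ t ∈ Finset.Icc 1 T, r t / √t ≤
      2 * m * √T + ∑ i : Fin T, (r (i + 1) - m) / √((i + 1 : ℕ) : ℝ) := by
  have hreindex : ∑ t ∈ Finset.Icc 1 T, (r t - m) / √t
      = ∑ i : Fin T, (r (i + 1) - m) / √((i + 1 : ℕ) : ℝ) := by
    rw [Fin.sum_univ_eq_sum_range (fun i => (r (i + 1) - m) / √((i + 1 : ℕ) : ℝ)),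
      Finset.range_eq_Ico, Finset.sum_Ico_add' (fun t => (r t - m) / √(t : ℝ))]
    rfl
  calc ∑ t ∈ Finset.Icc 1 T, r t / √t
      = m * ∑ t ∈ Finset.Icc 1 T, 1 / √t + ∑ t ∈ Finset.Icc 1 T, (r t - m) / √t := by
        rw [Finset.mul_sum, ← Finset.sum_add_distrib]
        exact Finset.sum_congr rfl fun t _ => by ring
    _ ≤ m * (2 * √T) + ∑ i : Fin T, (r (i + 1) - m) / √((i + 1 : ℕ) : ℝ) := by
        rw [hreindex]
        gcongr
        exact sum_Icc_one_div_sqrt_le T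
    _ = _ := by ring

namespace ProbabilityTheory

variable {Ω : Type*} [MeasurableSpace Ω] {μ : Measure Ω} [IsProbabilityMeasure μ]

theorem mgf_le_exp_of_abs_le {X : Ω → ℝ} (hX : AEMeasurable X μ) {M t : ℝ} (hM : 0 ≤ M)
    (ht : 0 ≤ t) (htM : t * M < 3) (hb : ∀ᵐ ω ∂μ, |X ω| ≤ M) (hmean : μ[X] = 0) :
    mgf X μ t ≤ exp (t ^ 2 * (∫ ω, X ω ^ 2 ∂μ) / (2 * (1 - t * M / 3))) := by
  set K := t ^ 2 / (2 * (1 - t * M / 3))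
  have hpt : ∀ᵐ ω ∂μ, exp (t * X ω) ≤ 1 + t * X ω + K * X ω ^ 2 := by
    filter_upwards [hb] with ω hω
    have hu : t * X ω ≤ t * M := mul_le_mul_of_nonneg_left ((le_abs_self _).trans hω) ht
    calc exp (t * X ω) ≤ 1 + t * X ω + (t * X ω) ^ 2 / (2 * (1 - t * M / 3)) :=
          exp_le_of_le_of_lt_three hu (mul_nonneg ht hM) htM
      _ = 1 + t * X ω + K * X ω ^ 2 := by ring
  have hint : Integrable X μ :=
    .of_bound hX.aestronglyMeasurable M (by simpa using hb)
  have hint_sq : Integrable (fun ω => X ω ^ 2) μ :=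
    .of_bound (hX.pow_const 2).aestronglyMeasurable (M ^ 2) <| by
      filter_upwards [hb] with ω hω
      simpa using pow_le_pow_left₀ (abs_nonneg _) hω 2
  have hint_exp : Integrable (fun ω => exp (t * X ω)) μ :=
    .of_bound (hX.const_mul t).exp.aestronglyMeasurable (exp (t * M)) <| by
      filter_upwards [hb] with ω hω
      rw [norm_of_nonneg (exp_pos _).le, exp_le_exp]
      exact mul_le_mul_of_nonneg_left ((le_abs_self _).trans hω) ht
  have hint_lin : Integrable (fun ω => 1 + t * X ω) μ := (integrable_const 1).add (hint.const_mul t)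
  calc mgf X μ t ≤ ∫ ω, (1 + t * X ω + K * X ω ^ 2) ∂μ :=
        integral_mono_ae hint_exp (hint_lin.add (hint_sq.const_mul K)) hpt
    _ = 1 + K * ∫ ω, X ω ^ 2 ∂μ := by
        rw [integral_add hint_lin (hint_sq.const_mul K),
          integral_add (integrable_const 1) (hint.const_mul t), integral_const_mul,
          integral_const_mul, hmean]
        simp
    _ ≤ exp (K * ∫ ω, X ω ^ 2 ∂μ) := by linarith [add_one_le_exp (K * ∫ ω, X ω ^ 2 ∂μ)]
    _ = _ := by rw [div_mul_eq_mul_div]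

theorem ae_eq_zero_of_integral_sq_eq_zero {X : Ω → ℝ} (hX : AEMeasurable X μ) {M : ℝ}
    (hb : ∀ᵐ ω ∂μ, |X ω| ≤ M) (h : ∫ ω, X ω ^ 2 ∂μ = 0) : X =ᵐ[μ] 0 := by
  have hint_sq : Integrable (fun ω => X ω ^ 2) μ :=
    .of_bound (hX.pow_const 2).aestronglyMeasurable (M ^ 2) <| by
      filter_upwards [hb] with ω hω
      simpa using pow_le_pow_left₀ (abs_nonneg _) hω 2
  filter_upwards [(integral_eq_zero_iff_of_nonneg (fun ω => sq_nonneg (X ω)) hint_sq).1 h]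
    with ω hω
  simpa using hω

theorem measure_sum_ge_le_bernstein {ι : Type*} [Fintype ι] {Z : ι → Ω → ℝ}
    (hindep : iIndepFun Z μ) (hmeas : ∀ i, Measurable (Z i)) {M V ε : ℝ} (hM : 0 ≤ M)
    (hε : 0 < ε) (hb : ∀ i, ∀ᵐ ω ∂μ, |Z i ω| ≤ M) (hmean : ∀ i, μ[Z i] = 0)
    (hvar : ∑ i, ∫ ω, Z i ω ^ 2 ∂μ ≤ V) :
    μ {ω | ε ≤ ∑ i, Z i ω} ≤ ENNReal.ofReal (exp (-ε ^ 2 / (2 * V + 2 / 3 * M * ε))) := by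
  have hsq_nonneg (i : ι) : 0 ≤ ∫ ω, Z i ω ^ 2 ∂μ := integral_nonneg fun ω => sq_nonneg _
  -- The Chernoff parameter chosen below needs `V > 0`; if `V = 0`, every `Z i` vanishes a.e.
  rcases (Finset.sum_nonneg fun i _ => hsq_nonneg i).trans hvar |>.eq_or_lt with hV | hV
  · have hzero : ∀ᵐ ω ∂μ, ∀ i, Z i ω = 0 := ae_all_iff.2 fun i =>
      ae_eq_zero_of_integral_sq_eq_zero (hmeas i).aemeasurable (hb i) <|
        (Finset.sum_eq_zero_iff_of_nonneg fun i _ => hsq_nonneg i).1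
          (le_antisymm (hV ▸ hvar) (Finset.sum_nonneg fun i _ => hsq_nonneg i)) i
          (Finset.mem_univ i)
    refine le_of_eq_of_le (measure_mono_null ?_ (ae_iff.1 hzero)) zero_le
    intro ω (hω : ε ≤ ∑ i, Z i ω) h
    simp only [h, Finset.sum_const_zero] at hω
    linarith
  set D := 3 * V + M * ε
  have hD : 0 < D := by positivity
  set t := 3 * ε / D
  have ht : 0 < t := by positivity
  have htM : t * M < 3 := by
    rw [div_mul_eq_mul_div, div_lt_iff₀ hD]
    nlinarith
  have hbM : ∀ᵐ ω ∂μ, |∑ i, Z i ω| ≤ ∑ _i : ι, M := by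
    filter_upwards [ae_all_iff.2 hb] with ω hω
    exact (Finset.abs_sum_le_sum_abs _ _).trans (Finset.sum_le_sum fun i _ => hω i)
  have hmeas_sum : Measurable fun ω => ∑ i, Z i ω := Finset.measurable_sum _ fun i _ => hmeas i
  have hint_exp : Integrable (fun ω => exp (t * ∑ i, Z i ω)) μ :=
    .of_bound (hmeas_sum.const_mul t).exp.aestronglyMeasurable (exp (t * ∑ _i : ι, M)) <| by
      filter_upwards [hbM] with ω hω
      rw [norm_of_nonneg (exp_pos _).le, exp_le_exp]
      exact mul_le_mul_of_nonneg_left ((le_abs_self _).trans hω) ht.le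
  have hmgf : mgf (fun ω => ∑ i, Z i ω) μ t ≤ exp (t ^ 2 * V / (2 * (1 - t * M / 3))) := by
    calc mgf (fun ω => ∑ i, Z i ω) μ t = ∏ i, mgf (Z i) μ t := by
          rw [← hindep.mgf_sum hmeas]; congr; ext ω; simp
      _ ≤ ∏ i, exp (t ^ 2 * (∫ ω, Z i ω ^ 2 ∂μ) / (2 * (1 - t * M / 3))) :=
          Finset.prod_le_prod (fun i _ => mgf_nonneg) fun i _ =>
            mgf_le_exp_of_abs_le (hmeas i).aemeasurable hM ht.le htM (hb i) (hmean i)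
      _ = exp (t ^ 2 * (∑ i, ∫ ω, Z i ω ^ 2 ∂μ) / (2 * (1 - t * M / 3))) := by
          rw [← exp_sum, ← Finset.sum_div, Finset.mul_sum]
      _ ≤ _ := by gcongr; linarith
  have hexponent :
      -t * ε + t ^ 2 * V / (2 * (1 - t * M / 3)) = -ε ^ 2 / (2 * V + 2 / 3 * M * ε) := by
    simp only [t, D]
    field_simp
    ring
  rw [← ENNReal.ofReal_toReal (measure_ne_top μ _), ← hexponent, exp_add]
  refine ENNReal.ofReal_le_ofReal ((measure_ge_le_exp_mul_mgf ε ht.le hint_exp).trans ?_)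
  gcongr

theorem measure_sum_mul_sub_ge_le {ι : Type*} [Fintype ι] {X : ι → Ω → ℝ}
    (hindep : iIndepFun X μ) (hmeas : ∀ i, Measurable (X i)) {w : ι → ℝ} {W b m σ V ε : ℝ}
    (hw0 : ∀ i, 0 ≤ w i) (hwW : ∀ i, w i ≤ W) (hW : 0 ≤ W) (hb : 0 ≤ b)
    (hX : ∀ i, ∀ᵐ ω ∂μ, X i ω ∈ Set.Icc 0 b) (hmean : ∀ i, μ[X i] = m)
    (hvar : ∀ i, variance (X i) μ = σ) (hV : σ * ∑ i, w i ^ 2 ≤ V) (hε : 0 < ε) :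
    μ {ω | ε ≤ ∑ i, w i * (X i ω - m)} ≤
      ENNReal.ofReal (exp (-ε ^ 2 / (2 * V + 2 / 3 * (W * b) * ε))) := by
  have hint (i : ι) : Integrable (X i) μ :=
    .of_bound (hmeas i).aestronglyMeasurable b <| (hX i).mono fun ω hω => by
      rw [norm_of_nonneg hω.1]; exact hω.2
  have hm (i : ι) : m ∈ Set.Icc 0 b :=
    hmean i ▸ (convex_Icc 0 b).integral_mem isClosed_Icc (hX i) (hint i)
  refine measure_sum_ge_le_bernstein (Z := fun i ω => w i * (X i ω - m))
    (hindep.comp _ fun i => (measurable_id.sub_const m).const_mul (w i))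
    (fun i => ((hmeas i).sub_const m).const_mul (w i)) (mul_nonneg hW hb) hε
    (fun i => ?_) (fun i => ?_) ?_
  · filter_upwards [hX i] with ω hω
    rw [abs_mul, abs_of_nonneg (hw0 i)]
    exact mul_le_mul (hwW i) (abs_sub_le_iff.2 ⟨by linarith [hω.2, (hm i).1],
      by linarith [hω.1, (hm i).2]⟩) (abs_nonneg _) hW
  · simp [integral_const_mul, integral_sub (hint i) (integrable_const m), hmean i]
  · calc ∑ i, ∫ ω, (w i * (X i ω - m)) ^ 2 ∂μ = ∑ i, σ * w i ^ 2 := by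
          refine Finset.sum_congr rfl fun i _ => ?_
          rw [← hvar i, variance_eq_integral (hmeas i).aemeasurable, hmean i, ← integral_mul_const]
          congr 1; ext ω; ring
      _ ≤ V := by rwa [← Finset.mul_sum]

end ProbabilityTheory

theorem Finset.sum_Icc_mul_sub_le {a D : ℕ → ℝ} {B : ℝ} (ha : Monotone a) (ha0 : 0 ≤ a 0) :
    ∀ {T : ℕ}, (∀ t ∈ Finset.Icc 1 (T + 1), D t ≤ B) →
      ∑ t ∈ Finset.Icc 1 T, a t * (D t - D (t + 1)) ≤ a T * (B - D (T + 1))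
  | 0, hD => by simpa using mul_nonneg ha0 (sub_nonneg.2 (hD 1 (by simp)))
  | T + 1, hD => by
    have ih := Finset.sum_Icc_mul_sub_le ha ha0 (T := T) fun t ht =>
      hD t (Finset.Icc_subset_Icc_right (by omega) ht)
    have hmono : a T ≤ a (T + 1) := ha (Nat.le_succ T)
    have hB : D (T + 1) ≤ B := hD (T + 1) (by simp)
    rw [Finset.sum_Icc_succ_top (by omega)]
    nlinarith

section
variable {E : Type*} [NormedAddCommGroup E] [InnerProductSpace ℝ E] [CompleteSpace E]

theorem ConvexOn.sub_le_inner_gradient {f : E → ℝ} (hf : ConvexOn ℝ Set.univ f) {x : E}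
    (hdf : DifferentiableAt ℝ f x) (y : E) : f x - f y ≤ inner ℝ (gradient f x) (x - y) := by
  let g : ℝ → ℝ := fun θ => f (x + θ • (y - x))
  have hg : ConvexOn ℝ Set.univ g := by
    simpa [g, Function.comp_def, AffineMap.lineMap_apply, add_comm] using
      hf.comp_affineMap (AffineMap.lineMap x y)
  have hline : HasDerivAt (fun θ : ℝ => x + θ • (y - x)) (y - x) 0 := by
    simpa using ((hasDerivAt_id (0 : ℝ)).smul_const (y - x)).const_add x
  have hderiv : HasDerivAt g (inner ℝ (gradient f x) (y - x)) 0 := by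
    have hf' := hdf.hasGradientAt.hasFDerivAt
    rw [← add_zero x, ← zero_smul ℝ (y - x)] at hf'
    simpa [g, Function.comp_def] using hf'.comp_hasDerivAt 0 hline
  have := hg.le_slope_of_hasDerivAt (Set.mem_univ 0) (Set.mem_univ 1) zero_lt_one hderiv
  rw [slope_def_field] at this
  have hneg : inner ℝ (gradient f x) (x - y) = - inner ℝ (gradient f x) (y - x) := by
    rw [← inner_neg_right, neg_sub]
  simp only [g, sub_zero, div_one, zero_smul, add_zero, one_smul, add_sub_cancel] at this
  linarith

theorem sub_le_of_noisy_gradient_step {f : E → ℝ} (hf : ConvexOn ℝ Set.univ f)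
    {x x' z c y : E} (hdf : DifferentiableAt ℝ f z) {α L u r : ℝ} (hα : 0 < α)
    (hg : ‖gradient f z‖ ≤ L) (hx' : x' = x - α • gradient f z) (hz : z = x + u • c)
    (hu0 : 0 ≤ u) (hu : u ≤ α * L) (hc : ‖c‖ ≤ r) :
    f z - f y ≤ (‖x - y‖ ^ 2 - ‖x' - y‖ ^ 2) / (2 * α) + α * L ^ 2 / 2 + α * L ^ 2 * r := by
  set g := gradient f z
  have hL : 0 ≤ L := (norm_nonneg g).trans hg
  have hconv : f z - f y ≤ inner ℝ g (x - y) + u * inner ℝ g c := by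
    have := hf.sub_le_inner_gradient hdf y
    rwa [hz, add_sub_right_comm, inner_add_right, real_inner_smul_right, ← hz] at this
  have hdist : ‖x' - y‖ ^ 2 = ‖x - y‖ ^ 2 - 2 * α * inner ℝ g (x - y) + α ^ 2 * ‖g‖ ^ 2 := by
    rw [hx', sub_right_comm, norm_sub_sq_real, inner_smul_right, real_inner_comm, norm_smul,
      Real.norm_of_nonneg hα.le]
    ring
  have hstale : u * inner ℝ g c ≤ α * L ^ 2 * r :=
    calc u * inner ℝ g c ≤ u * (‖g‖ * ‖c‖) :=
          mul_le_mul_of_nonneg_left (real_inner_le_norm g c) hu0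
      _ ≤ (α * L) * (L * r) :=
          mul_le_mul hu (mul_le_mul hg hc (norm_nonneg c) hL)
            (mul_nonneg (norm_nonneg g) (norm_nonneg c)) (by positivity)
      _ = α * L ^ 2 * r := by ring
  have hgrad : α ^ 2 * ‖g‖ ^ 2 ≤ α ^ 2 * L ^ 2 := by gcongr
  have hdescent : inner ℝ g (x - y) ≤ (‖x - y‖ ^ 2 - ‖x' - y‖ ^ 2) / (2 * α) + α * L ^ 2 / 2 := by
    rw [div_add' _ _ _ (by positivity), le_div_iff₀ (by positivity)]
    nlinarith
  linarith

theorem sum_sub_le_of_noisy_sgd {f : ℕ → E → ℝ} {x z c : ℕ → E} {u r : ℕ → ℝ} {y : E}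
    {T : ℕ} {η L F : ℝ} (hη : 0 < η)
    (hconv : ∀ t ∈ Finset.Icc 1 T, ConvexOn ℝ Set.univ (f t))
    (hdiff : ∀ t ∈ Finset.Icc 1 T, DifferentiableAt ℝ (f t) (z t))
    (hgrad : ∀ t ∈ Finset.Icc 1 T, ‖gradient (f t) (z t)‖ ≤ L)
    (hrec : ∀ t ∈ Finset.Icc 1 T, x (t + 1) = x t - (η / √t) • gradient (f t) (z t))
    (hu : ∀ t ∈ Finset.Icc 1 T, 0 ≤ u t ∧ u t ≤ η * L / √t)
    (hz : ∀ t ∈ Finset.Icc 1 T, z t = x t + u t • c t)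
    (hc : ∀ t ∈ Finset.Icc 1 T, ‖c t‖ ≤ r t)
    (hdiam : ∀ t ∈ Finset.Icc 1 (T + 1), 1 / 2 * ‖y - x t‖ ^ 2 ≤ F ^ 2) {m : ℝ} (hm : 0 ≤ m) :
    ∑ t ∈ Finset.Icc 1 T, (f t (z t) - f t y) ≤
      √T * (η * L ^ 2 + F ^ 2 / η + 2 * η * L ^ 2 * m)
        + ∑ i : Fin T, η * L ^ 2 / √((i + 1 : ℕ) : ℝ) * (r (i + 1) - m) := by
  have hstep : ∀ t ∈ Finset.Icc 1 T, f t (z t) - f t y ≤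
      √t / (2 * η) * (‖x t - y‖ ^ 2 - ‖x (t + 1) - y‖ ^ 2) + η * L ^ 2 / 2 * (1 / √t)
        + η * L ^ 2 * (r t / √t) := by
    intro t ht
    have hsqrt : 0 < √(t : ℝ) := sqrt_pos.2 (by exact_mod_cast (Finset.mem_Icc.1 ht).1)
    have := sub_le_of_noisy_gradient_step (hconv t ht) (y := y) (hdiff t ht)
      (div_pos hη hsqrt) (hgrad t ht) (hrec t ht) (hz t ht) (hu t ht).1
      ((hu t ht).2.trans_eq (div_mul_eq_mul_div η _ L).symm) (hc t ht)
    convert this using 2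
    all_goals field_simp
  have htelescope := Finset.sum_Icc_mul_sub_le (a := fun t : ℕ => √t / (2 * η))
    (D := fun t => ‖x t - y‖ ^ 2) (B := 2 * F ^ 2)
    (fun s t hst => by dsimp only; gcongr) (by simp) fun t ht => by
      have := hdiam t ht
      rw [norm_sub_rev] at this
      linarith
  have hlast : 0 ≤ √T / (2 * η) * ‖x (T + 1) - y‖ ^ 2 := by positivity
  calc _ ≤ ∑ t ∈ Finset.Icc 1 T, (√t / (2 * η) * (‖x t - y‖ ^ 2 - ‖x (t + 1) - y‖ ^ 2)
          + η * L ^ 2 / 2 * (1 / √t) + η * L ^ 2 * (r t / √t)) := Finset.sum_le_sum hstep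
    _ = _ := by
        rw [Finset.sum_add_distrib, Finset.sum_add_distrib, ← Finset.mul_sum, ← Finset.mul_sum]
    _ ≤ √T / (2 * η) * (2 * F ^ 2) + η * L ^ 2 / 2 * (2 * √T)
          + η * L ^ 2 * ∑ t ∈ Finset.Icc 1 T, r t / √t := by
        gcongr ?_ + _ * ?_ + _
        · linarith
        · exact sum_Icc_one_div_sqrt_le T
    _ ≤ √T / (2 * η) * (2 * F ^ 2) + η * L ^ 2 / 2 * (2 * √T) + η * L ^ 2 *
          (2 * m * √T + ∑ i : Fin T, (r (i + 1) - m) / √((i + 1 : ℕ) : ℝ)) := by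
        gcongr
        exact sum_Icc_div_sqrt_le_add_sum_fin hm T
    _ = _ := by
        rw [mul_add, Finset.mul_sum, ← add_assoc]
        congr 1
        · field_simp
          ring
        · exact Finset.sum_congr rfl fun i _ => by ring
end

theorem stmt_9_general (d T : ℕ) (hT : 1 ≤ T)
    (η L F : ℝ) (hη : 0 < η)
    (P s : ℕ)
    (xstar : EuclideanSpace ℝ (Fin d))
    {Ω : Type*} [MeasureSpace Ω] [IsProbabilityMeasure (ℙ : Measure Ω)]
    (γ : ℕ → Ω → ℝ) (hmeas : ∀ t ∈ Finset.Icc 1 T, Measurable (γ t))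
    (hindep : iIndepFun (fun i : Fin T => γ ((i:ℕ)+1)) ℙ)
    (hbound : ∀ t ∈ Finset.Icc 1 T,
      ∀ᵐ ω ∂ℙ, γ t ω ∈ Set.Icc (0:ℝ) ((2*(s:ℝ)+1)*(P:ℝ)))
    (μγ σγ : ℝ)
    (hmean : ∀ t ∈ Finset.Icc 1 T, ∫ ω, γ t ω ∂ℙ = μγ)
    (hvar : ∀ t ∈ Finset.Icc 1 T, variance (γ t) ℙ = σγ)
    (f : ℕ → EuclideanSpace ℝ (Fin d) → ℝ)
    (hconv : ∀ t ∈ Finset.Icc 1 T, ConvexOn ℝ Set.univ (f t))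
    (hdiff : ∀ t ∈ Finset.Icc 1 T, Differentiable ℝ (f t))
    (hgrad : ∀ t ∈ Finset.Icc 1 T, ∀ x, ‖gradient (f t) x‖ ≤ L)
    (x xtilde : ℕ → Ω → EuclideanSpace ℝ (Fin d))
    (ubar : ℕ → Ω → ℝ) (c : ℕ → Ω → EuclideanSpace ℝ (Fin d))
    (hrec : ∀ t ∈ Finset.Icc 1 T, ∀ ω,
      x (t+1) ω = x t ω - (η / Real.sqrt t) • gradient (f t) (xtilde t ω))
    (hub : ∀ t ∈ Finset.Icc 1 T, ∀ ω, 0 ≤ ubar t ω ∧ ubar t ω ≤ η * L / Real.sqrt t)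
    (hdecomp : ∀ t ∈ Finset.Icc 1 T, ∀ ω, xtilde t ω = x t ω + ubar t ω • c t ω)
    (hc : ∀ t ∈ Finset.Icc 1 T, ∀ᵐ ω ∂ℙ, ‖c t ω‖ ≤ γ t ω)
    (hdiam : ∀ t ∈ Finset.Icc 1 (T+1), ∀ᵐ ω ∂ℙ, (1/2) * ‖xstar - x t ω‖^2 ≤ F^2)
    (τ : ℝ) (hτ : 0 < τ) :
    ℙ {ω | τ ≤ (∑ t ∈ Finset.Icc 1 T, (f t (xtilde t ω) - f t xstar)) / (T:ℝ)
            - (1 / Real.sqrt T) * (η * L^2 + F^2 / η + 2 * η * L^2 * μγ)}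
      ≤ ENNReal.ofReal (Real.exp (-(T:ℝ) * τ^2 /
          (2 * (η^2 * L^4 * (Real.log T + 1) / T) * σγ
            + (2/3) * η * L^2 * ((2*(s:ℝ)+1)*(P:ℝ)) * τ))) := by
  have hT0 : (0 : ℝ) < T := by exact_mod_cast hT
  have h1T : 1 ∈ Finset.Icc 1 T := Finset.left_mem_Icc.2 hT
  have hmem (i : Fin T) : (i : ℕ) + 1 ∈ Finset.Icc 1 T := Finset.mem_Icc.2 ⟨by omega, i.isLt⟩
  have hμ : 0 ≤ μγ := hmean 1 h1T ▸ integral_nonneg_of_ae ((hbound 1 h1T).mono fun ω h => h.1)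
  have hσ : 0 ≤ σγ := hvar 1 h1T ▸ variance_nonneg _ _
  let w : Fin T → ℝ := fun i => η * L ^ 2 / √((i + 1 : ℕ) : ℝ)
  have hevent : ∀ᵐ ω ∂ℙ, τ ≤ (∑ t ∈ Finset.Icc 1 T, (f t (xtilde t ω) - f t xstar)) / (T:ℝ)
      - (1 / √T) * (η * L^2 + F^2 / η + 2 * η * L^2 * μγ) →
      T * τ ≤ ∑ i, w i * (γ (i + 1) ω - μγ) := by
    filter_upwards [(Filter.eventually_all_finset _).2 hc,
      (Filter.eventually_all_finset _).2 hdiam] with ω hcω hdiamω hE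
    have hregret := sum_sub_le_of_noisy_sgd hη hconv (fun t ht => (hdiff t ht).differentiableAt)
      (fun t ht => hgrad t ht _) (fun t ht => hrec t ht ω) (fun t ht => hub t ht ω)
      (fun t ht => hdecomp t ht ω) hcω hdiamω hμ
    have hsqrtT : 1 / √T * T = √(T : ℝ) := by
      rw [div_mul_eq_mul_div, one_mul, div_eq_iff (by positivity), mul_self_sqrt hT0.le]
    rw [le_sub_iff_add_le, le_div_iff₀ hT0] at hE
    linear_combination hE + hregret - (η * L ^ 2 + F ^ 2 / η + 2 * η * L ^ 2 * μγ) * hsqrtT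
  calc _ ≤ ℙ {ω | T * τ ≤ ∑ i, w i * (γ (i + 1) ω - μγ)} := measure_mono_ae hevent
    _ ≤ _ := measure_sum_mul_sub_ge_le (W := η * L ^ 2) hindep (fun i => hmeas _ (hmem i))
          (fun i => by positivity) (fun i => div_le_self (by positivity) (one_le_sqrt.2 (by simp)))
          (by positivity) (by positivity) (fun i => hbound _ (hmem i)) (fun i => hmean _ (hmem i))
          (fun i => hvar _ (hmem i)) (mul_le_mul_of_nonneg_left (sum_fin_sq_div_sqrt_le _ T) hσ)
          (by positivity)
    _ = _ := by
        congr 2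
        field_simp

/-- Theorem 5 (SGD under SSP, convergence in probability):
exponential tail bound on the regret of the noisy views. -/
theorem stmt_9 (d T : ℕ) (hd : 1 ≤ d) (hT : 1 ≤ T)
    (η L F : ℝ) (hη : 0 < η) (hL : 0 ≤ L) (hF : 0 ≤ F)
    (P s : ℕ) (hP : 1 ≤ P)
    (xstar : EuclideanSpace ℝ (Fin d))
    {Ω : Type*} [MeasureSpace Ω] [IsProbabilityMeasure (ℙ : Measure Ω)]
    (γ : ℕ → Ω → ℝ) (hmeas : ∀ t ∈ Finset.Icc 1 T, Measurable (γ t))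
    (hindep : iIndepFun (fun i : Fin T => γ ((i:ℕ)+1)) ℙ)
    (hident : ∀ t ∈ Finset.Icc 1 T, ∀ t' ∈ Finset.Icc 1 T,
      IdentDistrib (γ t) (γ t') ℙ ℙ)
    (hbound : ∀ t ∈ Finset.Icc 1 T,
      ∀ᵐ ω ∂ℙ, γ t ω ∈ Set.Icc (0:ℝ) ((2*(s:ℝ)+1)*(P:ℝ)))
    (μγ σγ : ℝ)
    (hmean : ∀ t ∈ Finset.Icc 1 T, ∫ ω, γ t ω ∂ℙ = μγ)
    (hvar : ∀ t ∈ Finset.Icc 1 T, variance (γ t) ℙ = σγ)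
    (f : ℕ → EuclideanSpace ℝ (Fin d) → ℝ)
    (hconv : ∀ t ∈ Finset.Icc 1 T, ConvexOn ℝ Set.univ (f t))
    (hdiff : ∀ t ∈ Finset.Icc 1 T, Differentiable ℝ (f t))
    (hgrad : ∀ t ∈ Finset.Icc 1 T, ∀ x, ‖gradient (f t) x‖ ≤ L)
    (x xtilde : ℕ → Ω → EuclideanSpace ℝ (Fin d))
    (ubar : ℕ → Ω → ℝ) (c : ℕ → Ω → EuclideanSpace ℝ (Fin d))
    (hrec : ∀ t ∈ Finset.Icc 1 T, ∀ ω,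
      x (t+1) ω = x t ω - (η / Real.sqrt t) • gradient (f t) (xtilde t ω))
    (hub : ∀ t ∈ Finset.Icc 1 T, ∀ ω, 0 ≤ ubar t ω ∧ ubar t ω ≤ η * L / Real.sqrt t)
    (hdecomp : ∀ t ∈ Finset.Icc 1 T, ∀ ω, xtilde t ω = x t ω + ubar t ω • c t ω)
    (hc : ∀ t ∈ Finset.Icc 1 T, ∀ᵐ ω ∂ℙ, ‖c t ω‖ ≤ γ t ω)
    (hdiam : ∀ t ∈ Finset.Icc 1 (T+1), ∀ᵐ ω ∂ℙ, (1/2) * ‖xstar - x t ω‖^2 ≤ F^2)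
    (τ : ℝ) (hτ : 0 < τ) :
    ℙ {ω | τ ≤ (∑ t ∈ Finset.Icc 1 T, (f t (xtilde t ω) - f t xstar)) / (T:ℝ)
            - (1 / Real.sqrt T) * (η * L^2 + F^2 / η + 2 * η * L^2 * μγ)}
      ≤ ENNReal.ofReal (Real.exp (-(T:ℝ) * τ^2 /
          (2 * (η^2 * L^4 * (Real.log T + 1) / T) * σγ
            + (2/3) * η * L^2 * ((2*(s:ℝ)+1)*(P:ℝ)) * τ))) :=
  stmt_9_general d T hT η L F hη P s xstar γ hmeas hindep hbound μγ σγ hmean hvar f hconv hdiff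
    hgrad x xtilde ubar c hrec hub hdecomp hc hdiam τ hτ
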